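/- Fix u ∈ (0,1) and a finite set of posterior values a_1, ..., a_L ∈ [0,1] with min_i a_i ≤ u ≤ max_i a_i. Among all probability weight vectors (G_1,...,G_L) satisfying ∑_i a_i G_i = u, the mutual information h(u) − ∑_i G_i h(a_i) is maximized by the two-point distribution supported on indices attaining max_i a_i and min_i a_i, with weights G_{max} = (u − a_{min})/(a_{max} − a_{min}) and G_{min} = (a_{max} − u)/(a_{max} − a_{min}) (assuming a_{max} > a_{min}). -/

import Mathlib

open Finset Real

/-!
Binary entropy is concave on `[0, 1]`, so at every posterior value `a i ∈ [a_min, a_max]` it lies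
above its chord through `a_min` and `a_max`. The chord is affine, so averaging it against any
admissible `G` gives its value at the mean `u`, which is exactly `∑ i, Gstar i * h (a i)`.
-/

theorem ConcaveOn.chord_le {s : Set ℝ} {f : ℝ → ℝ} (hf : ConcaveOn ℝ s f) {m M z : ℝ}
    (hm : m ∈ s) (hM : M ∈ s) (hmM : m < M) (hz : z ∈ Set.Icc m M) :
    (z - m) / (M - m) * f M + (M - z) / (M - m) * f m ≤ f z := by
  have hd : 0 < M - m := sub_pos.2 hmM
  have hcomb : (M - z) / (M - m) * m + (z - m) / (M - m) * M = z := by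
    field_simp; ring
  have := hf.2 hm hM (div_nonneg (sub_nonneg.2 hz.2) hd.le)
    (div_nonneg (sub_nonneg.2 hz.1) hd.le) (by field_simp; ring)
  simp only [smul_eq_mul, hcomb] at this
  linarith

theorem ConcaveOn.chord_at_mean_le_sum {ι : Type*} {s : Set ℝ} {f : ℝ → ℝ}
    (hf : ConcaveOn ℝ s f) {m M u : ℝ} (hm : m ∈ s) (hM : M ∈ s) (hmM : m < M)
    (t : Finset ι) (w p : ι → ℝ) (hw : ∀ i ∈ t, 0 ≤ w i) (hw₁ : ∑ i ∈ t, w i = 1)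
    (hwp : ∑ i ∈ t, w i * p i = u) (hp : ∀ i ∈ t, p i ∈ Set.Icc m M) :
    (u - m) / (M - m) * f M + (M - u) / (M - m) * f m ≤ ∑ i ∈ t, w i * f (p i) := by
  have hd : M - m ≠ 0 := (sub_pos.2 hmM).ne'
  have chord_affine : ∀ i, w i * ((p i - m) / (M - m) * f M + (M - p i) / (M - m) * f m) =
      w i * p i * ((f M - f m) / (M - m)) + w i * ((M * f m - m * f M) / (M - m)) := by
    intro i; field_simp; ring
  calc (u - m) / (M - m) * f M + (M - u) / (M - m) * f m
      = ∑ i ∈ t, w i * ((p i - m) / (M - m) * f M + (M - p i) / (M - m) * f m) := by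
        rw [sum_congr rfl fun i _ => chord_affine i, sum_add_distrib, ← sum_mul, ← sum_mul,
          hwp, hw₁]
        field_simp; ring
    _ ≤ ∑ i ∈ t, w i * f (p i) :=
        sum_le_sum fun i hi => mul_le_mul_of_nonneg_left (hf.chord_le hm hM hmM (hp i hi)) (hw i hi)

theorem Fintype.sum_ite_ite_mul {ι : Type*} [Fintype ι] [DecidableEq ι] {i₀ i₁ : ι}
    (hne : i₀ ≠ i₁) (c₀ c₁ : ℝ) (f : ι → ℝ) :
    ∑ i, (if i = i₀ then c₀ else if i = i₁ then c₁ else 0) * f i = c₀ * f i₀ + c₁ * f i₁ := by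
  rw [Fintype.sum_eq_add i₀ i₁ hne fun i hi => by simp [hi.1, hi.2]]
  simp [hne.symm]

theorem bimodal_query_maximizes_MI_general (u : ℝ)
    (h : ℝ → ℝ) (hh : ∀ a, h a = -a * log a - (1 - a) * log (1 - a))
    (L : ℕ) (a : Fin L → ℝ) (ha : ∀ i, a i ∈ Set.Icc (0 : ℝ) 1)
    (i₀ i₁ : Fin L)
    (hmax : ∀ i, a i ≤ a i₀) (hmin : ∀ i, a i₁ ≤ a i)
    (hlt : a i₁ < a i₀) (hu₁ : a i₁ ≤ u) (hu₀ : u ≤ a i₀)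
    (Gstar : Fin L → ℝ)
    (hGstar : Gstar = fun i =>
      if i = i₀ then (u - a i₁) / (a i₀ - a i₁)
      else if i = i₁ then (a i₀ - u) / (a i₀ - a i₁) else 0) :
    ((∀ i, 0 ≤ Gstar i) ∧ (∑ i, Gstar i) = 1 ∧ (∑ i, a i * Gstar i) = u) ∧
      ∀ G : Fin L → ℝ, (∀ i, 0 ≤ G i) → (∑ i, G i) = 1 →
        (∑ i, a i * G i) = u →
        h u - (∑ i, G i * h (a i)) ≤ h u - (∑ i, Gstar i * h (a i)) := by
  have hd : 0 < a i₀ - a i₁ := sub_pos.2 hlt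
  have h_eq : h = binEntropy := funext fun x => by
    rw [hh, binEntropy_eq_negMulLog_add_negMulLog_one_sub, negMulLog, negMulLog]; ring
  have hGstar_sum : ∀ f : Fin L → ℝ, ∑ i, Gstar i * f i =
      (u - a i₁) / (a i₀ - a i₁) * f i₀ + (a i₀ - u) / (a i₀ - a i₁) * f i₁ :=
    hGstar ▸ Fintype.sum_ite_ite_mul (fun e => hlt.ne' (congrArg a e)) _ _
  refine ⟨⟨fun i => ?_, ?_, ?_⟩, fun G hG hG₁ hGu => ?_⟩
  · rw [hGstar]
    dsimp only
    split_ifs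
    exacts [div_nonneg (sub_nonneg.2 hu₁) hd.le, div_nonneg (sub_nonneg.2 hu₀) hd.le, le_rfl]
  · have := hGstar_sum 1
    simp only [Pi.one_apply, mul_one] at this
    rw [this]
    field_simp; ring
  · rw [sum_congr rfl fun i _ => mul_comm (a i) (Gstar i), hGstar_sum]
    field_simp; ring
  · have := strictConcave_binEntropy.concaveOn.chord_at_mean_le_sum (ha i₁) (ha i₀) hlt univ G a
      (fun i _ => hG i) hG₁ (by simpa only [mul_comm] using hGu) fun i _ => ⟨hmin i, hmax i⟩
    rw [h_eq, hGstar_sum]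
    linarith

/-- Bimodal query optimality (discrete version): with the label marginal `u`
fixed and posteriors `a i` given, among all probability weight vectors `G` with
`∑ a i * G i = u`, the mutual information `h(u) − ∑ G i h(a i)` is maximized by
the two-point distribution supported on the indices attaining the maximal and
minimal posterior values, with the stated weights. -/
theorem bimodal_query_maximizes_MI (u : ℝ) (hu : u ∈ Set.Ioo (0 : ℝ) 1)
    (h : ℝ → ℝ) (hh : ∀ a, h a = -a * log a - (1 - a) * log (1 - a))
    (L : ℕ) (a : Fin L → ℝ) (ha : ∀ i, a i ∈ Set.Icc (0 : ℝ) 1)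
    (i₀ i₁ : Fin L)
    (hmax : ∀ i, a i ≤ a i₀) (hmin : ∀ i, a i₁ ≤ a i)
    (hlt : a i₁ < a i₀) (hu₁ : a i₁ ≤ u) (hu₀ : u ≤ a i₀)
    (Gstar : Fin L → ℝ)
    (hGstar : Gstar = fun i =>
      if i = i₀ then (u - a i₁) / (a i₀ - a i₁)
      else if i = i₁ then (a i₀ - u) / (a i₀ - a i₁) else 0) :
    ((∀ i, 0 ≤ Gstar i) ∧ (∑ i, Gstar i) = 1 ∧ (∑ i, a i * Gstar i) = u) ∧
      ∀ G : Fin L → ℝ, (∀ i, 0 ≤ G i) → (∑ i, G i) = 1 →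
        (∑ i, a i * G i) = u →
        h u - (∑ i, G i * h (a i)) ≤ h u - (∑ i, Gstar i * h (a i)) :=
  bimodal_query_maximizes_MI_general u h hh L a ha i₀ i₁ hmax hmin hlt hu₁ hu₀ Gstar hGstar
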